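/- arXiv:math/0508323 — 3 statements merged into one kernel-verified Lean document; each statement's English description precedes it below -/
import Mathlib

section
/- For all integers p and k there exists an integer N(p,k) such that every graph G with tree-width at most k has a p-centered coloring using at most N(p,k) colors. -/
open scoped Classical

universe u v

/-- A rooted forest given by its ancestor order: `le x y` means `x` is an ancestor of `y`
(or `x = y`); ancestors of any vertex form a chain. -/
structure RootedForest (V : Type u) where
  le : V → V → Prop
  le_refl : ∀ x, le x x
  le_antisymm : ∀ x y, le x y → le y x → x = y
  le_trans : ∀ x y z, le x y → le y z → le x z
  ancestors_chain : ∀ x y z, le x z → le y z → le x y ∨ le y x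

/-- The closure of a rooted forest: each vertex is joined to all its proper ancestors. -/
def RootedForest.clos {V : Type u} (F : RootedForest V) : SimpleGraph V where
  Adj x y := x ≠ y ∧ (F.le x y ∨ F.le y x)
  symm := by
    refine ⟨?_⟩
    rintro x y ⟨h1, h2⟩
    exact ⟨h1.symm, h2.symm⟩
  loopless := ⟨fun x h => h.1 rfl⟩

/-- The height of a rooted forest: maximum number of vertices on a root-to-vertex path. -/
noncomputable def RootedForest.height {V : Type u} [Fintype V] (F : RootedForest V) : ℕ :=
  Finset.univ.sup fun x => (Finset.univ.filter fun y => F.le y x).card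

/-- Tree-depth: minimum height of a rooted forest whose closure contains `G`. -/
noncomputable def treeDepth {V : Type u} [Fintype V] (G : SimpleGraph V) : ℕ :=
  sInf {n : ℕ | ∃ F : RootedForest V, G ≤ F.clos ∧ F.height ≤ n}

/-- `H` is a `k`-tree: there is a construction order in which every vertex is added
adjacent to a clique of size at most `k` among the earlier vertices. -/
def IsKTree {V : Type u} (k : ℕ) (H : SimpleGraph V) : Prop :=
  ∃ r : V → V → Prop, IsStrictTotalOrder V r ∧
    ∀ x : V, H.IsClique {y | r y x ∧ H.Adj y x} ∧ {y | r y x ∧ H.Adj y x}.ncard ≤ k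

/-- Tree-width: minimum `k` such that `G` is a subgraph of a `k`-tree. -/
noncomputable def treeWidth {V : Type u} [Fintype V] (G : SimpleGraph V) : ℕ :=
  sInf {k : ℕ | ∃ H : SimpleGraph V, G ≤ H ∧ IsKTree k H}

/-- A `p`-centered coloring: every connected subgraph either has a color appearing
exactly once, or receives at least `p` colors. -/
def IsCenteredColoring {V : Type u} {α : Type v} (p : ℕ) (G : SimpleGraph V)
    (c : V → α) : Prop :=
  ∀ S : Set V, (G.induce S).Connected →
    (∃ x ∈ S, ∀ y ∈ S, c y = c x → y = x) ∨ p ≤ (c '' S).ncard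

/-- A class of (finite) graphs. -/
def GraphClass : Type 1 := ∀ (V : Type) [Fintype V], SimpleGraph V → Prop

def HasLowTreeWidthColorings (C : GraphClass) : Prop :=
  ∀ p : ℕ, 1 ≤ p → ∃ N : ℕ, ∀ (V : Type) [Fintype V], ∀ G : SimpleGraph V, C V G →
    ∃ c : V → Fin N, ∀ I : Finset (Fin N), I.card ≤ p →
      ∀ K : (G.induce {v | c v ∈ I}).ConnectedComponent,
        treeWidth ((G.induce {v | c v ∈ I}).induce K.supp) ≤ I.card - 1

def HasLowTreeDepthColorings (C : GraphClass) : Prop :=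
  ∀ p : ℕ, 1 ≤ p → ∃ N : ℕ, ∀ (V : Type) [Fintype V], ∀ G : SimpleGraph V, C V G →
    ∃ c : V → Fin N, ∀ I : Finset (Fin N), I.card ≤ p →
      ∀ K : (G.induce {v | c v ∈ I}).ConnectedComponent,
        treeDepth ((G.induce {v | c v ∈ I}).induce K.supp) ≤ I.card

/-- `χ_p(G)`: minimum number of colors such that any `i < p` color classes induce a
subgraph of tree-depth at most `i`. -/
noncomputable def chiP {V : Type u} [Fintype V] (p : ℕ) (G : SimpleGraph V) : ℕ :=
  sInf {N : ℕ | ∃ c : V → Fin N, ∀ I : Finset (Fin N), I.card < p →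
    treeDepth (G.induce {v | c v ∈ I}) ≤ I.card}

/-- `H` is a minor of `G`: disjoint connected branch sets, one per vertex of `H`,
joined by edges of `G` as prescribed by the edges of `H`. -/
def IsMinorOf {W : Type v} {V : Type u} (H : SimpleGraph W) (G : SimpleGraph V) : Prop :=
  ∃ B : W → Set V, (∀ w, (G.induce (B w)).Connected) ∧
    (Pairwise fun w w' => Disjoint (B w) (B w')) ∧
    ∀ w w', H.Adj w w' → ∃ u ∈ B w, ∃ x ∈ B w', G.Adj u x

/-- The Hadwiger number: largest `n` with `K_n` a minor of `G`. -/
noncomputable def hadwiger {V : Type u} [Fintype V] (G : SimpleGraph V) : ℕ :=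
  sSup {n : ℕ | IsMinorOf (⊤ : SimpleGraph (Fin n)) G}

/-- The grad `∇(G)`: maximum of `|E(H)|/|V(H)|` over minors `H` of `G`. -/
noncomputable def gradMax {V : Type u} [Fintype V] (G : SimpleGraph V) : ℝ :=
  sSup {x : ℝ | ∃ (W : Type) (_ : Finite W) (H : SimpleGraph W),
    IsMinorOf H G ∧ x = (H.edgeSet.ncard : ℝ) / (Nat.card W : ℝ)}

/-- The quotient of `G` by a family of balls. -/
def quotientGraph {V : Type u} (G : SimpleGraph V) {p : ℕ} (B : Fin p → Set V) :
    SimpleGraph (Fin p) where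
  Adj i j := i ≠ j ∧ ((B i ∩ B j).Nonempty ∨ ∃ u ∈ B i, ∃ x ∈ B j, G.Adj u x)
  symm := by
    refine ⟨?_⟩
    rintro i j ⟨hij, h⟩
    refine ⟨hij.symm, ?_⟩
    rcases h with h | ⟨u, hu, x, hx, huv⟩
    · exact Or.inl (by rwa [Set.inter_comm])
    · exact Or.inr ⟨x, hx, u, hu, huv.symm⟩
  loopless := ⟨fun i h => h.1 rfl⟩

/-- A family of balls of radius at most `r` and complexity at most `c`. -/
def IsBallFamily {V : Type u} (G : SimpleGraph V) (r c : ℕ) {p : ℕ}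
    (B : Fin p → Set V) : Prop :=
  (∀ i, (G.induce (B i)).Connected ∧
    ∃ x : B i, ∀ y : B i, (G.induce (B i)).dist x y ≤ r) ∧
  ∀ v : V, ({i | v ∈ B i} : Set (Fin p)).ncard ≤ c

/-- The grad `∇^c_r(G)` of `G` with rank `r` and complexity `c`. -/
noncomputable def gradCR {V : Type u} [Fintype V] (c r : ℕ) (G : SimpleGraph V) : ℝ :=
  sSup {x : ℝ | ∃ (p : ℕ) (B : Fin p → Set V), IsBallFamily G r c B ∧
    x = ((quotientGraph G B).edgeSet.ncard : ℝ) / (p : ℝ)}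

/-- The grad `∇_r(G)` of `G` with rank `r`. -/
noncomputable def gradR {V : Type u} [Fintype V] (r : ℕ) (G : SimpleGraph V) : ℝ :=
  gradCR 1 r G

def HasBoundedExpansion (C : GraphClass) : Prop :=
  ∃ f : ℕ → ℝ, ∀ (V : Type) [Fintype V], ∀ G : SimpleGraph V, C V G →
    ∀ r : ℕ, gradR r G ≤ f r

/-- The lexicographic product of two graphs. -/
def lexProd {V : Type u} {W : Type v} (G : SimpleGraph V) (H : SimpleGraph W) :
    SimpleGraph (V × W) where
  Adj a b := G.Adj a.1 b.1 ∨ (a.1 = b.1 ∧ H.Adj a.2 b.2)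
  symm := by
    refine ⟨?_⟩
    rintro a b (h | ⟨h1, h2⟩)
    · exact Or.inl h.symm
    · exact Or.inr ⟨h1.symm, h2.symm⟩
  loopless := by
    refine ⟨?_⟩
    rintro a (h | ⟨h1, h2⟩)
    · exact G.loopless.irrefl a.1 h
    · exact H.loopless.irrefl a.2 h2

/-- A loopless directed graph with at most one arc in each direction between two vertices. -/
structure Digr (V : Type u) where
  Adj : V → V → Prop
  irrefl : ∀ x, ¬ Adj x x

/-- The underlying simple graph of a digraph. -/
def Digr.toSimple {V : Type u} (D : Digr V) : SimpleGraph V where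
  Adj x y := D.Adj x y ∨ D.Adj y x
  symm := ⟨fun x y h => h.symm⟩
  loopless := ⟨fun x h => h.elim (D.irrefl x) (D.irrefl x)⟩

/-- Maximum indegree of a set of arcs (a binary relation). -/
noncomputable def inDegMax {V : Type u} [Fintype V] (R : V → V → Prop) : ℕ :=
  Finset.univ.sup fun y => (Finset.univ.filter fun x => R x y).card

def listArcs {V : Type u} (l : List V) : List (V × V) := l.zip l.tail

def internalVerts {V : Type u} (l : List V) : List V := l.tail.dropLast

/-- `l` is (the vertex list of) a directed path in `D`. -/
def IsDiPath {V : Type u} (D : Digr V) (l : List V) : Prop :=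
  l ≠ [] ∧ l.Nodup ∧ l.Chain' D.Adj

/-- `l` is a directed path in `D` from `x` to `z`. -/
def DiPathBetween {V : Type u} (D : Digr V) (l : List V) (x z : V) : Prop :=
  IsDiPath D l ∧ l.head? = some x ∧ l.getLast? = some z

/-- No internal vertex or arc of one path belongs to the other. -/
def SeparatedPair {V : Type u} (l1 l2 : List V) : Prop :=
  (∀ v ∈ internalVerts l1, v ∉ l2) ∧ (∀ v ∈ internalVerts l2, v ∉ l1) ∧
  ∀ e ∈ listArcs l1, e ∉ listArcs l2

/-- `y` is `(a,b)`-reachable from `x` in `D`. -/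
def ABReachable {V : Type u} (D : Digr V) (a b : ℕ) (x y : V) : Prop :=
  x ≠ y ∧ ∃ (z : V) (l1 l2 : List V),
    DiPathBetween D l1 x z ∧ DiPathBetween D l2 y z ∧
    l1.length ≤ a + 1 ∧ l2.length ≤ b + 1 ∧ SeparatedPair l1 l2

/-- `L` is an `(a,b)`-augmentation of `D`. -/
def IsAugmentation {V : Type u} (D : Digr V) (a b : ℕ) (L : V → V → Prop) : Prop :=
  ∀ x y, ABReachable D a b x y → L x y ∨ L y x

/-- `H` is a `1`-transitive fraternal augmentation of `D`. -/
def IsOneTFA {V : Type u} (D H : Digr V) : Prop :=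
  (∀ x y, D.Adj x y → H.Adj x y) ∧
  (∀ x y z, x ≠ y → D.Adj x z → D.Adj z y → H.Adj x y) ∧
  (∀ x y z, x ≠ y → D.Adj x z → D.Adj y z → H.Adj x y ∨ H.Adj y x)

/-- `Gs` (indexed from `1`) is a transitive fraternal augmentation of `D`. -/
def IsTFASeq {V : Type u} (D : Digr V) (Gs : ℕ → Digr V) : Prop :=
  Gs 1 = D ∧ ∀ i, 1 ≤ i → IsOneTFA (Gs i) (Gs (i + 1))

/-- `D` is an orientation of the graph `G`. -/
def IsOrientationOf {V : Type u} (D : Digr V) (G : SimpleGraph V) : Prop :=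
  (∀ x y, D.Adj x y → ¬ D.Adj y x) ∧ D.toSimple = G

/-- An acyclically oriented clique of size `p` in a digraph. -/
def AcyclicOrientedClique {V : Type u} (H : Digr V) (S : Set V) (p : ℕ) : Prop :=
  S.ncard = p ∧ (∀ x ∈ S, ∀ y ∈ S, x ≠ y → H.Adj x y ∨ H.Adj y x) ∧
  ∀ x : V, ¬ Relation.TransGen (fun a b => a ∈ S ∧ b ∈ S ∧ H.Adj a b) x x

/-!
Embed `G` in a `k`-tree `H` and use its construction order, in which the back neighbors of each
vertex form a clique of size at most `k`. Color greedily along this order so that any two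
vertices joined by a descending path of `H` with fewer than `p` edges get different colors;
`(k + 1) ^ (p - 1)` colors suffice.

Let a connected set `S` see fewer than `p` colors and let `x` be its least vertex. Because back
neighborhoods are cliques, every `y ∈ S` reaches `x` by a descending path inside `S`. That path
has fewer than `p` vertices, since otherwise its first `p` vertices would carry `p` colors, so
`y` and `x` get different colors and the color of `x` is unique in `S`.
-/

open Finset Relation

theorem List.length_le_ncard_image {V α : Type*} {c : V → α} {S : Set V} {l : List V}
    (hl : (l.map c).Nodup) (hlS : ∀ a ∈ l, a ∈ S) (hS : (c '' S).Finite) :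
    l.length ≤ (c '' S).ncard := by
  classical
  calc l.length = #(l.map c).toFinset := by rw [List.toFinset_card_of_nodup hl, List.length_map]
    _ = ((l.map c).toFinset : Set α).ncard := (Set.ncard_coe_finset _).symm
    _ ≤ (c '' S).ncard := Set.ncard_le_ncard (fun _ h => by
        obtain ⟨a, ha, rfl⟩ := List.mem_map.mp (List.mem_toFinset.mp h)
        exact ⟨a, hlS a ha, rfl⟩) hS

section Elimination

variable {V : Type*} [LinearOrder V] {D : V → V → Prop}

/-- `D v u` says that `u` is a back neighbor of `v` in an elimination order whose back
neighborhoods are cliques, such as the construction order of a `k`-tree. -/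
structure IsEliminationRel (D : V → V → Prop) : Prop where
  lt_of_rel : ∀ {v u}, D v u → u < v
  rel_of_rel_of_lt : ∀ {v u w}, D v u → D v w → u < w → D w u

namespace IsEliminationRel

theorem restrict (hD : IsEliminationRel D) (S : Set V) :
    IsEliminationRel fun a b => D a b ∧ a ∈ S ∧ b ∈ S where
  lt_of_rel h := hD.lt_of_rel h.1
  rel_of_rel_of_lt hu hw huw := ⟨hD.rel_of_rel_of_lt hu.1 hw.1 huw, hw.2.2, hu.2.2⟩

theorem le_of_reflTransGen (hD : IsEliminationRel D) {v u : V} (h : ReflTransGen D v u) :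
    u ≤ v := by
  induction h with
  | refl => rfl
  | tail _ hbc ih => exact (hD.lt_of_rel hbc).le.trans ih

variable [WellFoundedLT V]

theorem reflTransGen_of_lt (hD : IsEliminationRel D) {z u w : V} (hu : ReflTransGen D z u)
    (hw : ReflTransGen D z w) (huw : u < w) : ReflTransGen D w u := by
  induction z using WellFoundedLT.induction with
  | ind z ih =>
    rcases hu.cases_head with rfl | ⟨a, hza, hau⟩
    · exact absurd (hD.le_of_reflTransGen hw) huw.not_ge
    rcases hw.cases_head with rfl | ⟨b, hzb, hbw⟩
    · exact hu
    rcases lt_trichotomy a b with hab | rfl | hba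
    · exact ih b (hD.lt_of_rel hzb) (.head (hD.rel_of_rel_of_lt hza hzb hab) hau) hbw
    · exact ih a (hD.lt_of_rel hza) hau hbw
    · exact ih a (hD.lt_of_rel hza) hau (.head (hD.rel_of_rel_of_lt hzb hza hba) hbw)

theorem rel_of_reflTransGen (hD : IsEliminationRel D) {v y u : V} (hy : ReflTransGen D v y)
    (hu : D v u) (huy : u < y) : D y u := by
  induction v using WellFoundedLT.induction with
  | ind v ih =>
    rcases hy.cases_head with rfl | ⟨b, hvb, hby⟩
    · exact hu
    rcases lt_or_ge u b with hub | hbu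
    · exact ih b (hD.lt_of_rel hvb) hby (hD.rel_of_rel_of_lt hu hvb hub)
    · exact absurd ((hD.le_of_reflTransGen hby).trans hbu) huy.not_ge

theorem transGen_of_lt (hD : IsEliminationRel D) {z x y : V} (hx : ReflTransGen D z x)
    (hy : ReflTransGen D z y) (hxy : x < y) : TransGen D y x := by
  induction hx using ReflTransGen.head_induction_on with
  | refl => exact absurd (hD.le_of_reflTransGen hy) hxy.not_ge
  | @head z a hza hax ih =>
    rcases lt_trichotomy a y with hay | rfl | hya
    · exact .head' (hD.rel_of_reflTransGen hy hza hay) hax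
    · exact (reflTransGen_iff_eq_or_transGen.mp hax).resolve_left hxy.ne
    · exact ih (hD.reflTransGen_of_lt hy (.single hza) hya)

theorem reflTransGen_restrict_of_preconnected (hD : IsEliminationRel D) {G : SimpleGraph V}
    (hG : G ≤ SimpleGraph.fromRel D) {S : Set V} (hS : (G.induce S).Preconnected) {x : V}
    (hx : x ∈ S) (hmin : ∀ y ∈ S, x ≤ y) {y : V} (hy : y ∈ S) :
    ReflTransGen (fun a b => D a b ∧ a ∈ S ∧ b ∈ S) y x := by
  suffices ∀ b : S, ReflTransGen (G.induce S).Adj ⟨x, hx⟩ b →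
      ReflTransGen (fun a b => D a b ∧ a ∈ S ∧ b ∈ S) b x from
    this ⟨y, hy⟩ ((SimpleGraph.reachable_iff_reflTransGen _ _).mp (hS _ _))
  intro b hb
  induction hb with
  | refl => rfl
  | @tail a b _ hab ih =>
    rcases (hG hab).2 with hab | hba
    · rcases (hmin b b.2).eq_or_lt with hxb | hxb
      · rw [← hxb]
      · exact ((hD.restrict S).transGen_of_lt ih (.single ⟨hab, a.2, b.2⟩) hxb).to_reflTransGen
    · exact .head ⟨hba, b.2, a.2⟩ ih

end IsEliminationRel

end Elimination

theorem IsEliminationRel.isCenteredColoring {V α : Type*} [LinearOrder V] [Finite V]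
    {D : V → V → Prop} (hD : IsEliminationRel D) {G : SimpleGraph V}
    (hG : G ≤ SimpleGraph.fromRel D) {p : ℕ} (c : V → α)
    (hc : ∀ l : List V, l.IsChain D → l.length ≤ p → (l.map c).Nodup) :
    IsCenteredColoring p G c := by
  intro S hS
  refine (le_or_gt p (c '' S).ncard).symm.imp (fun hlt => ?_) id
  obtain ⟨⟨y₀, hy₀⟩⟩ := hS.nonempty
  obtain ⟨x, hx, hmin⟩ := S.exists_min_image id S.toFinite ⟨y₀, hy₀⟩
  refine ⟨x, hx, fun y hy hcy => ?_⟩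
  obtain ⟨l, hl, rfl⟩ := List.exists_isChain_cons_of_relationReflTransGen
    (hD.reflTransGen_restrict_of_preconnected hG hS.preconnected hx hmin hy)
  have hchain : (y :: l).IsChain D := hl.imp fun _ _ h => h.1
  have hlS : ∀ a ∈ y :: l, a ∈ S :=
    List.IsChain.induction (· ∈ S) _ hl (fun _ _ h _ => h.2.2) fun _ => hy
  have hlen : (y :: l).length ≤ p := by
    by_contra! hp
    have hrainbow := hc _ (hchain.take p) (List.length_take_le _ _)
    have := List.length_le_ncard_image hrainbow (fun a ha => hlS a (List.mem_of_mem_take ha))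
      (S.toFinite.image c)
    rw [List.length_take_of_le hp.le] at this
    omega
  exact List.inj_on_of_nodup_map (hc _ hchain hlen) List.mem_cons_self (List.getLast_mem _) hcy

section Descendants

variable {V : Type*} [Fintype V] {D : V → V → Prop}

variable (D) in
noncomputable def descendantsWithin : ℕ → V → Finset V
  | 0, v => {v}
  | n + 1, v => insert v ((univ.filter (D v)).biUnion (descendantsWithin n))

theorem self_mem_descendantsWithin (n : ℕ) (v : V) : v ∈ descendantsWithin D n v := by
  cases n <;> simp [descendantsWithin]

theorem card_descendantsWithin_le {k : ℕ} (hk : ∀ v, #(univ.filter (D v)) ≤ k)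
    (n : ℕ) (v : V) :
    #(descendantsWithin D n v) ≤ (k + 1) ^ n := by
  induction n generalizing v with
  | zero => simp [descendantsWithin]
  | succ n ih =>
    calc #(descendantsWithin D (n + 1) v)
        ≤ #((univ.filter (D v)).biUnion (descendantsWithin D n)) + 1 := card_insert_le _ _
      _ ≤ #(univ.filter (D v)) * (k + 1) ^ n + 1 := by
          gcongr; exact card_biUnion_le_card_mul _ _ _ fun u _ => ih u
      _ ≤ k * (k + 1) ^ n + (k + 1) ^ n := by
          gcongr
          exacts [hk v, Nat.one_le_pow _ _ k.succ_pos]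
      _ = (k + 1) ^ (n + 1) := by ring

theorem mem_descendantsWithin_of_isChain {v : V} {l : List V} (hl : (v :: l).IsChain D)
    {n : ℕ} (hn : l.length ≤ n) {u : V} (hu : u ∈ v :: l) :
    u ∈ descendantsWithin D n v := by
  induction l generalizing v n with
  | nil => rw [List.mem_singleton.mp hu]; exact self_mem_descendantsWithin n v
  | cons a l ih =>
    obtain ⟨m, rfl⟩ : ∃ m, n = m + 1 := Nat.exists_eq_succ_of_ne_zero (by simp at hn; omega)
    rw [List.isChain_cons_cons] at hl
    rcases List.mem_cons.mp hu with rfl | hu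
    · exact self_mem_descendantsWithin _ _
    · exact mem_insert_of_mem <|
        mem_biUnion.mpr ⟨a, by simpa using hl.1, ih hl.2 (by simpa using hn) hu⟩

theorem reflTransGen_of_mem_descendantsWithin {n : ℕ} {v u : V}
    (hu : u ∈ descendantsWithin D n v) : ReflTransGen D v u := by
  induction n generalizing v with
  | zero => rw [descendantsWithin, mem_singleton] at hu; rw [hu]
  | succ n ih =>
    rcases mem_insert.mp hu with rfl | hu
    · rfl
    obtain ⟨a, ha, hu⟩ := mem_biUnion.mp hu
    exact .head (mem_filter.mp ha).2 (ih hu)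

theorem IsEliminationRel.nodup_map_of_isChain [LinearOrder V] (hD : IsEliminationRel D)
    {α : Type*} {c : V → α} {n : ℕ}
    (hc : ∀ v, ∀ u ∈ (descendantsWithin D n v).erase v, c u ≠ c v) {l : List V}
    (hl : l.IsChain D) (hlen : l.length ≤ n + 1) : (l.map c).Nodup := by
  induction l with
  | nil => simp
  | cons v l ih =>
    have hlen' : l.length ≤ n := by simpa using hlen
    refine List.nodup_cons.mpr ⟨fun hv => ?_, ih hl.tail (by omega)⟩
    obtain ⟨u, hu, hcu⟩ := List.mem_map.mp hv
    have huv : v > u := (hl.imp fun _ _ h => hD.lt_of_rel h).rel_cons hu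
    exact hc v u (mem_erase.mpr ⟨huv.ne,
      mem_descendantsWithin_of_isChain hl hlen' (List.mem_cons_of_mem _ hu)⟩) hcu

end Descendants

theorem exists_fin_coloring_of_lt {V : Type*} [LinearOrder V] [WellFoundedLT V] {N : ℕ}
    (A : V → Finset V) (hA : ∀ v, ∀ u ∈ A v, u < v) (hN : ∀ v, #(A v) < N) :
    ∃ c : V → Fin N, ∀ v, ∀ u ∈ A v, c u ≠ c v := by
  choose fresh _ hfresh using fun (s : Finset (Fin N)) (hs : #s < N) =>
    exists_mem_notMem_of_card_lt_card (s := s) (t := univ) (by rwa [card_univ, Fintype.card_fin])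
  let used (v : V) (c : ∀ u, u < v → Fin N) : Finset (Fin N) :=
    (A v).attach.image fun u => c u.1 (hA v u.1 u.2)
  have hused (v : V) (c : ∀ u, u < v → Fin N) : #(used v c) < N :=
    card_image_le.trans_lt (by simpa using hN v)
  let c : V → Fin N := wellFounded_lt.fix fun v c => fresh (used v c) (hused v c)
  refine ⟨c, fun v u hu hcu => hfresh _ (hused v fun u _ => c u) ?_⟩
  have hcv : c v = fresh (used v fun u _ => c u) (hused v fun u _ => c u) :=
    wellFounded_lt.fix_eq _ v
  rw [← hcv, ← hcu]
  exact mem_image.mpr ⟨⟨u, hu⟩, mem_attach _ _, rfl⟩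

theorem IsEliminationRel.exists_centeredColoring {V : Type*} [Fintype V] [LinearOrder V]
    {D : V → V → Prop} (hD : IsEliminationRel D) {k : ℕ}
    (hk : ∀ v, #(univ.filter (D v)) ≤ k)
    {G : SimpleGraph V} (hG : G ≤ SimpleGraph.fromRel D) (p : ℕ) :
    ∃ c : V → Fin ((k + 1) ^ (p - 1)), IsCenteredColoring p G c := by
  obtain ⟨c, hc⟩ := exists_fin_coloring_of_lt (fun v => (descendantsWithin D (p - 1) v).erase v)
    (fun _ _ hu => lt_of_le_of_ne
      (hD.le_of_reflTransGen (reflTransGen_of_mem_descendantsWithin (mem_of_mem_erase hu)))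
      (ne_of_mem_erase hu))
    (fun v => (card_erase_lt_of_mem (self_mem_descendantsWithin _ v)).trans_le
      (card_descendantsWithin_le hk _ v))
  exact ⟨c, hD.isCenteredColoring hG c fun _ hl hlen =>
    hD.nodup_map_of_isChain hc hl (by omega)⟩

theorem IsKTree.mono {V : Type*} {k k' : ℕ} {H : SimpleGraph V} (hH : IsKTree k H)
    (hk : k ≤ k') : IsKTree k' H := by
  obtain ⟨r, hr, hback⟩ := hH
  exact ⟨r, hr, fun x => ⟨(hback x).1, (hback x).2.trans hk⟩⟩

theorem isKTree_top (V : Type*) [Finite V] : IsKTree (Nat.card V) (⊤ : SimpleGraph V) :=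
  ⟨WellOrderingRel, inferInstance, fun _ => ⟨fun _ _ _ _ h => h, Set.ncard_le_card _⟩⟩

theorem exists_isKTree_of_treeWidth_le {V : Type*} [Fintype V] {G : SimpleGraph V} {k : ℕ}
    (h : treeWidth G ≤ k) : ∃ H, G ≤ H ∧ IsKTree k H := by
  obtain ⟨H, hGH, hH⟩ := Nat.sInf_mem (s := {k | ∃ H, G ≤ H ∧ IsKTree k H})
    ⟨_, ⊤, le_top, isKTree_top V⟩
  exact ⟨H, hGH, hH.mono h⟩

theorem IsKTree.exists_centeredColoring {V : Type*} [Fintype V] {k : ℕ} {H G : SimpleGraph V}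
    (hH : IsKTree k H) (hGH : G ≤ H) (p : ℕ) :
    ∃ c : V → Fin ((k + 1) ^ (p - 1)), IsCenteredColoring p G c := by
  obtain ⟨r, hr, hback⟩ := hH
  let _ : LinearOrder V := linearOrderOfSTO r
  refine IsEliminationRel.exists_centeredColoring (D := fun v u => r u v ∧ H.Adj u v)
    ⟨fun h => h.1, fun hu hw huw => ⟨huw, (hback _).1 hu hw huw.ne⟩⟩ (fun v => ?_)
    (fun a b hab => ?_) p
  · rw [← Set.ncard_coe_finset]
    convert (hback v).2
    simp
  · have hab := hGH hab
    rcases lt_or_gt_of_ne hab.ne with h | h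
    · exact ⟨hab.ne, Or.inr ⟨h, hab⟩⟩
    · exact ⟨hab.ne, Or.inl ⟨h, hab.symm⟩⟩

/-- Graphs of tree-width at most `k` have `p`-centered colorings with a bounded
number of colors. -/
theorem stmt3 (p k : ℕ) :
    ∃ N : ℕ, ∀ (V : Type) [Fintype V], ∀ G : SimpleGraph V, treeWidth G ≤ k →
      ∃ c : V → Fin N, IsCenteredColoring p G c := by
  refine ⟨(k + 1) ^ (p - 1), fun V _ G hG => ?_⟩
  obtain ⟨H, hGH, hH⟩ := exists_isKTree_of_treeWidth_le hG
  exact hH.exists_centeredColoring hGH p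
end

section
/- For every graph G and all integers c ≥ 1 and r ≥ 0: ∇^c_r(G) = ∇_r(G • K_c), where K_c is the complete graph on c vertices. -/
open scoped Classical

universe u v

/-! A family of balls of complexity `c` in `G` lifts to a family of pairwise disjoint balls of
`G • K_c`: since at most `c` balls contain a vertex `v`, each of them can take its own copy
`(v, a)` of `v`. A lifted ball is isomorphic to the original one, and two balls sharing `v` become
adjacent through the edge between their copies of `v`, so the quotient graph can only gain edges.
Conversely, the projections to `G` of disjoint balls of `G • K_c` are balls of no larger radius,
and distinct balls through `v` contain distinct copies of `v`, so the complexity is at most `c`;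
again the quotient graph can only gain edges. Hence each ratio `|E(G/P)|/|P|` on one side is
dominated by one on the other side, and the two suprema agree. -/

namespace SimpleGraph

variable {α β : Type*} {G : SimpleGraph α} {H : SimpleGraph β} {f : α → β}

theorem Walk.exists_walk_length_le_of_adj_or_eq
    (hf : ∀ ⦃x y⦄, G.Adj x y → H.Adj (f x) (f y) ∨ f x = f y) :
    ∀ {u v : α} (p : G.Walk u v), ∃ q : H.Walk (f u) (f v), q.length ≤ p.length
  | _, _, .nil => ⟨.nil, le_rfl⟩
  | _, _, .cons h p => by
    obtain ⟨q, hq⟩ := exists_walk_length_le_of_adj_or_eq hf p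
    rcases hf h with hadj | heq
    · exact ⟨.cons hadj q, by simpa using hq⟩
    · exact ⟨q.copy heq.symm rfl, by simp only [Walk.length_copy, Walk.length_cons]; omega⟩

theorem dist_le_of_adj_or_eq (hf : ∀ ⦃x y⦄, G.Adj x y → H.Adj (f x) (f y) ∨ f x = f y)
    {u v : α} (huv : G.Reachable u v) : H.dist (f u) (f v) ≤ G.dist u v := by
  obtain ⟨p, hp⟩ := huv.exists_walk_length_eq_dist
  obtain ⟨q, hq⟩ := p.exists_walk_length_le_of_adj_or_eq hf
  exact (dist_le q).trans (hp ▸ hq)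

theorem connected_and_exists_dist_le_of_surjective
    (hf : ∀ ⦃x y⦄, G.Adj x y → H.Adj (f x) (f y) ∨ f x = f y) (hsurj : f.Surjective) {r : ℕ}
    (hG : G.Connected ∧ ∃ x, ∀ y, G.dist x y ≤ r) :
    H.Connected ∧ ∃ x, ∀ y, H.dist x y ≤ r := by
  obtain ⟨hconn, x, hx⟩ := hG
  have hreach : ∀ u v, H.Reachable (f u) (f v) := fun u v => by
    obtain ⟨p⟩ := hconn.preconnected u v
    obtain ⟨q, -⟩ := p.exists_walk_length_le_of_adj_or_eq hf
    exact q.reachable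
  have : Nonempty β := hconn.nonempty.map f
  refine ⟨⟨?_⟩, f x, ?_⟩
  · intro u v
    obtain ⟨u, rfl⟩ := hsurj u
    obtain ⟨v, rfl⟩ := hsurj v
    exact hreach u v
  · intro y
    obtain ⟨y, rfl⟩ := hsurj y
    exact (dist_le_of_adj_or_eq hf (hconn.preconnected x y)).trans (hx y)

end SimpleGraph

open SimpleGraph

theorem quotientGraph_le_quotientGraph_image {V W : Type*} {G : SimpleGraph V}
    {H : SimpleGraph W} {f : V → W} (hf : ∀ ⦃x y⦄, G.Adj x y → H.Adj (f x) (f y) ∨ f x = f y)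
    {p : ℕ} (B : Fin p → Set V) :
    quotientGraph G B ≤ quotientGraph H (fun i => f '' B i) := by
  rintro i j ⟨hij, ⟨v, hvi, hvj⟩ | ⟨u, hu, x, hx, hux⟩⟩
  · exact ⟨hij, Or.inl ⟨f v, Set.mem_image_of_mem f hvi, Set.mem_image_of_mem f hvj⟩⟩
  · refine ⟨hij, ?_⟩
    rcases hf hux with hadj | heq
    · exact Or.inr ⟨f u, Set.mem_image_of_mem f hu, f x, Set.mem_image_of_mem f hx, hadj⟩
    · exact Or.inl ⟨f u, Set.mem_image_of_mem f hu, heq ▸ Set.mem_image_of_mem f hx⟩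

theorem ncard_edgeSet_div_le_of_quotientGraph_le {V W : Type*} {G : SimpleGraph V}
    {H : SimpleGraph W} {p : ℕ} {B : Fin p → Set V} {B' : Fin p → Set W}
    (h : quotientGraph G B ≤ quotientGraph H B') :
    ((quotientGraph G B).edgeSet.ncard : ℝ) / p ≤ ((quotientGraph H B').edgeSet.ncard : ℝ) / p :=
  div_le_div_of_nonneg_right
    (Nat.cast_le.mpr (Set.ncard_le_ncard (edgeSet_mono h) (Set.toFinite _))) p.cast_nonneg

section LexProd

variable {V : Type*} {G : SimpleGraph V} {c r p : ℕ}

theorem lexProd_top_adj_fst {W : Type*} ⦃q q' : V × W⦄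
    (h : (lexProd G (⊤ : SimpleGraph W)).Adj q q') : G.Adj q.1 q'.1 ∨ q.1 = q'.1 :=
  h.imp id And.left

theorem IsBallFamily.exists_lexProd_top {B : Fin p → Set V} (hB : IsBallFamily G r c B) :
    ∃ B' : Fin p → Set (V × Fin c), IsBallFamily (lexProd G ⊤) r 1 B' ∧
      quotientGraph G B ≤ quotientGraph (lexProd G ⊤) B' := by
  have hcopies : ∀ v, ∃ g : {i // v ∈ B i} → Fin c, g.Injective := fun v => by
    have hcard : Fintype.card {i // v ∈ B i} ≤ Fintype.card (Fin c) := by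
      rw [Fintype.card_fin, ← Nat.card_eq_fintype_card]
      exact (Nat.card_coe_set_eq _).trans_le (hB.2 v)
    obtain ⟨g⟩ := Function.Embedding.nonempty_of_card_le hcard
    exact ⟨g, g.injective⟩
  choose g hg using hcopies
  let lift (i : Fin p) (v : B i) : V × Fin c := (v.1, g v ⟨i, v.2⟩)
  refine ⟨fun i => Set.range (lift i), ⟨fun i => ?_, fun q => ?_⟩, ?_⟩
  · exact connected_and_exists_dist_le_of_surjective
      (fun _ _ h => Or.inl (Or.inl h)) Set.rangeFactorization_surjective (hB.1 i)
  · rw [Set.ncard_le_one_iff]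
    rintro i j ⟨⟨u, _⟩, rfl⟩ ⟨⟨x, _⟩, hxu⟩
    obtain ⟨rfl, hgx⟩ := Prod.ext_iff.mp hxu
    exact congrArg Subtype.val (hg _ hgx).symm
  · rintro i j ⟨hij, ⟨v, hvi, hvj⟩ | ⟨u, hu, x, hx, hux⟩⟩
    · refine ⟨hij, Or.inr ⟨_, ⟨⟨v, hvi⟩, rfl⟩, _, ⟨⟨v, hvj⟩, rfl⟩, Or.inr ⟨rfl, ?_⟩⟩⟩
      exact (top_adj _ _).mpr fun h => hij (congrArg Subtype.val (hg v h))
    · exact ⟨hij, Or.inr ⟨_, ⟨⟨u, hu⟩, rfl⟩, _, ⟨⟨x, hx⟩, rfl⟩, Or.inl hux⟩⟩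

theorem IsBallFamily.exists_of_lexProd_top {B' : Fin p → Set (V × Fin c)}
    (hB' : IsBallFamily (lexProd G ⊤) r 1 B') :
    ∃ B : Fin p → Set V, IsBallFamily G r c B ∧
      quotientGraph (lexProd G ⊤) B' ≤ quotientGraph G B := by
  refine ⟨fun i => Prod.fst '' B' i, ⟨fun i => ?_, fun v => ?_⟩,
    quotientGraph_le_quotientGraph_image lexProd_top_adj_fst B'⟩
  · refine connected_and_exists_dist_le_of_surjective (fun q q' h => ?_)
      Set.imageFactorization_surjective (hB'.1 i)
    exact (lexProd_top_adj_fst h).imp id Subtype.ext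
  · have hcopy : ∀ i : {i // v ∈ Prod.fst '' B' i}, ∃ a, (v, a) ∈ B' i := by
      rintro ⟨i, ⟨v, a⟩, hva, rfl⟩
      exact ⟨a, hva⟩
    choose a ha using hcopy
    have ha_inj : a.Injective := fun i j hij => Subtype.ext <|
      (Set.ncard_le_one_iff (Set.toFinite _)).mp (hB'.2 (v, a i)) (ha i) (hij ▸ ha j)
    calc ({i | v ∈ Prod.fst '' B' i} : Set (Fin p)).ncard
        = Nat.card {i // v ∈ Prod.fst '' B' i} := (Nat.card_coe_set_eq _).symm
      _ ≤ Nat.card (Fin c) := Nat.card_le_card_of_injective a ha_inj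
      _ = c := Nat.card_eq_fintype_card.trans (Fintype.card_fin c)

end LexProd

theorem stmt10_general {V : Type} [Fintype V] (G : SimpleGraph V) (c r : ℕ) :
    gradCR c r G = gradR r (lexProd G (⊤ : SimpleGraph (Fin c))) := by
  refine csSup_eq_csSup_of_forall_exists_le ?_ ?_
  · rintro _ ⟨p, B, hB, rfl⟩
    obtain ⟨B', hB', hle⟩ := hB.exists_lexProd_top
    exact ⟨_, ⟨p, B', hB', rfl⟩, ncard_edgeSet_div_le_of_quotientGraph_le hle⟩
  · rintro _ ⟨p, B', hB', rfl⟩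
    obtain ⟨B, hB, hle⟩ := hB'.exists_of_lexProd_top
    exact ⟨_, ⟨p, B, hB, rfl⟩, ncard_edgeSet_div_le_of_quotientGraph_le hle⟩

/-- `∇^c_r(G) = ∇_r(G • K_c)`. -/
theorem stmt10 {V : Type} [Fintype V] (G : SimpleGraph V) (c r : ℕ) (hc : 1 ≤ c) :
    gradCR c r G = gradR r (lexProd G (⊤ : SimpleGraph (Fin c))) :=
  stmt10_general G c r
end

section
/- For every integer r ≥ 0 there exists a polynomial P_r in two variables such that for every graph G and all integers c ≥ 1: ∇^c_r(G) ≤ P_r(c, ∇_r(G)). -/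
open scoped Classical

universe u v

/-!
Fix a centre `x i` of each ball `B i`. Edges `ab` of the quotient with `x b ∈ B a` number at
most `c p`. For any other edge, join `x a` and `x b` by two radial walks ending at vertices that
coincide or are adjacent; at most `(2 r + 2) c` balls meet these walks. Now order the balls by a
random permutation and carve them greedily, shrinking each ball to the radius-`r` ball around its
centre inside what the earlier ones left over. The carved balls are disjoint, so their quotient
has at most `∇_r(G) p` edges, and `ab` survives in it whenever `a` and `b` come first among the
balls meeting the walks, which happens with probability at least `1 / ((2 r + 2) c) ^ 2`.
Hence `|E(G / P)| ≤ (c + ((2 r + 2) c) ^ 2 ∇_r(G)) p`.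
-/

namespace SimpleGraph

variable {V : Type u} {G : SimpleGraph V} {A B : Set V} {x y v : V} {r : ℕ}

variable (G) in
def ballIn (A : Set V) (x : V) (r : ℕ) : Set V :=
  {v | ∃ w : G.Walk x v, w.length ≤ r ∧ ∀ y ∈ w.support, y ∈ A}

lemma ballIn_mono {r' : ℕ} (hAB : A ⊆ B) (hr : r ≤ r') : G.ballIn A x r ⊆ G.ballIn B x r' :=
  fun _ ⟨w, hw, hA⟩ => ⟨w, hw.trans hr, fun y hy => hAB (hA y hy)⟩

lemma ballIn_subset : G.ballIn A x r ⊆ A :=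
  fun _ ⟨w, _, hA⟩ => hA _ w.end_mem_support

lemma center_mem_of_mem_ballIn (hv : v ∈ G.ballIn A x r) : x ∈ A :=
  let ⟨w, _, hA⟩ := hv
  hA _ w.start_mem_support

lemma self_mem_ballIn (hx : x ∈ A) : x ∈ G.ballIn A x r :=
  ⟨.nil, Nat.zero_le r, by simpa using hx⟩

lemma mem_ballIn_succ_of_adj (hx : x ∈ A) (hxy : G.Adj x y) (hv : v ∈ G.ballIn A y r) :
    v ∈ G.ballIn A x (r + 1) := by
  obtain ⟨w, hw, hA⟩ := hv
  refine ⟨.cons hxy w, by simpa using hw, fun z hz => ?_⟩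
  rcases List.mem_cons.mp (Walk.support_cons hxy w ▸ hz) with rfl | hz
  exacts [hx, hA z hz]

lemma Walk.support_subset_ballIn (w : G.Walk x v) (hw : w.length ≤ r)
    (hA : ∀ y ∈ w.support, y ∈ A) : ∀ y ∈ w.support, y ∈ G.ballIn A x r := fun y hy =>
  ⟨w.takeUntil y hy, (w.length_takeUntil_le_length hy).trans hw,
    fun z hz => hA z (w.support_takeUntil_subset_support hy hz)⟩

lemma ballIn_isBall (hx : x ∈ A) :
    (G.induce (G.ballIn A x r)).Connected ∧
      ∃ z : G.ballIn A x r, ∀ y : G.ballIn A x r,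
        (G.induce (G.ballIn A x r)).dist z y ≤ r := by
  have hwalk : ∀ y : G.ballIn A x r, ∃ q : (G.induce (G.ballIn A x r)).Walk
      ⟨x, self_mem_ballIn hx⟩ y, q.length ≤ r := by
    rintro ⟨v, w, hw, hA⟩
    refine ⟨w.induce _ (w.support_subset_ballIn hw hA), ?_⟩
    rwa [← Walk.length_map (Embedding.induce _).toHom, Walk.map_induce]
  refine ⟨(connected_iff_exists_forall_reachable _).mpr ⟨_, fun y => (hwalk y).elim
    fun q _ => q.reachable⟩, ⟨_, fun y => (hwalk y).elim fun q hq => (dist_le q).trans hq⟩⟩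

lemma subset_ballIn_of_dist_le (hconn : (G.induce A).Connected) (z : A)
    (hz : ∀ y : A, (G.induce A).dist z y ≤ r) : A ⊆ G.ballIn A z r := by
  intro v hv
  obtain ⟨q, hq⟩ := (hconn.preconnected z ⟨v, hv⟩).exists_walk_length_eq_dist
  refine ⟨q.map (Embedding.induce A).toHom, (q.length_map _).trans_le (hq ▸ hz _), ?_⟩
  intro y hy
  obtain ⟨y, -, rfl⟩ := List.mem_map.mp ((congrArg (y ∈ ·) (q.support_map _)).mp hy)
  exact y.2

lemma Walk.mem_ballIn_or_exists_adj {P : Set V} (w : G.Walk x v)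
    (hA : ∀ y ∈ w.support, y ∈ A) (hx : x ∉ P) :
    v ∈ G.ballIn (A \ P) x w.length ∨
      ∃ y ∈ G.ballIn (A \ P) x w.length, ∃ z ∈ A ∩ P, G.Adj y z := by
  induction w with
  | nil => exact .inl (self_mem_ballIn ⟨hA _ (by simp), hx⟩)
  | @cons x x' v hxx' w ih =>
    have hx' : x ∈ A \ P := ⟨hA x (by simp), hx⟩
    have hA' : ∀ y ∈ w.support, y ∈ A := fun y hy => hA y (by simp [hy])
    by_cases hx'P : x' ∈ P
    · exact .inr ⟨x, self_mem_ballIn hx', x', ⟨hA' _ w.start_mem_support, hx'P⟩, hxx'⟩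
    rw [Walk.length_cons]
    rcases ih hA' hx'P with hv | ⟨y, hy, hz⟩
    · exact .inl (mem_ballIn_succ_of_adj hx' hxx' hv)
    · exact .inr ⟨y, mem_ballIn_succ_of_adj hx' hxx' hy, hz⟩

end SimpleGraph

section Carving

open SimpleGraph

variable {V : Type u} (G : SimpleGraph V) {ι : Type v} (B : ι → Set V) (x : ι → V) (r : ℕ)
  (rank : ι → ℕ)

def carved (i : ι) : Set V :=
  G.ballIn (B i \ ⋃ (j) (_ : rank j < rank i), carved j) (x i) r
termination_by rank i

lemma carved_eq (i : ι) : carved G B x r rank i =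
    G.ballIn (B i \ ⋃ (j) (_ : rank j < rank i), carved G B x r rank j) (x i) r := by
  rw [carved]

variable {G B x r rank}

lemma carved_subset (i : ι) : carved G B x r rank i ⊆ B i :=
  (carved_eq G B x r rank i ▸ ballIn_subset).trans Set.sdiff_subset

lemma disjoint_carved_of_rank_lt {i j : ι} (h : rank j < rank i) :
    Disjoint (carved G B x r rank j) (carved G B x r rank i) := by
  rw [carved_eq G B x r rank i]
  refine Set.disjoint_of_subset_right ballIn_subset (Set.disjoint_sdiff_right.mono_left ?_)
  exact Set.subset_biUnion_of_mem (u := fun j => carved G B x r rank j) h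

lemma pairwise_disjoint_carved (hrank : Function.Injective rank) :
    Pairwise fun i j => Disjoint (carved G B x r rank i) (carved G B x r rank j) := by
  intro i j hij
  rcases lt_or_gt_of_ne (hrank.ne hij) with h | h
  exacts [disjoint_carved_of_rank_lt h, (disjoint_carved_of_rank_lt h).symm]

lemma carved_isBall {i : ι} (h : (carved G B x r rank i).Nonempty) :
    (G.induce (carved G B x r rank i)).Connected ∧
      ∃ z : carved G B x r rank i, ∀ y : carved G B x r rank i,
        (G.induce (carved G B x r rank i)).dist z y ≤ r := by
  rw [carved_eq] at h ⊢
  exact ballIn_isBall (center_mem_of_mem_ballIn h.some_mem)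

lemma exists_adj_carved {a b : ι} {S : Set V} {u w : V} (hab : rank a < rank b)
    (hu : u ∈ G.ballIn (B a ∩ S) (x a) r) (hw : w ∈ G.ballIn (B b ∩ S) (x b) r)
    (huw : u = w ∨ G.Adj u w) (hS : ∀ t, t ≠ a → rank t < rank b → Disjoint (B t) S)
    (hxb : x b ∉ B a) :
    ∃ y ∈ carved G B x r rank a, ∃ z ∈ carved G B x r rank b, G.Adj y z := by
  set U := fun i => ⋃ (j) (_ : rank j < rank i), carved G B x r rank j
  have hUa : Disjoint (U a) S := by
    simp only [U, Set.disjoint_iUnion_left]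
    exact fun j hj => (hS j (by rintro rfl; exact hj.false) (hj.trans hab)).mono_left
      (carved_subset j)
  have hua : u ∈ carved G B x r rank a := by
    rw [carved_eq]
    exact ballIn_mono (B := B a \ U a) (fun v hv => ⟨hv.1, hUa.notMem_of_mem_right hv.2⟩)
      le_rfl hu
  have hUb : U b ∩ S ⊆ carved G B x r rank a := by
    rintro v ⟨hvU, hvS⟩
    simp only [U, Set.mem_iUnion] at hvU
    obtain ⟨j, hj, hv⟩ := hvU
    by_contra hja
    exact (hS j (by rintro rfl; exact hja hv) hj).notMem_of_mem_right hvS (carved_subset j hv)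
  obtain ⟨R, hR, hRS⟩ := hw
  have hxbU : x b ∉ U b := fun h =>
    hxb (carved_subset a (hUb ⟨h, (hRS _ R.start_mem_support).2⟩))
  have hcarved_b : G.ballIn ((B b ∩ S) \ U b) (x b) R.length ⊆ carved G B x r rank b := by
    rw [carved_eq]
    exact ballIn_mono (Set.sdiff_subset_sdiff_left Set.inter_subset_left) hR
  rcases R.mem_ballIn_or_exists_adj hRS hxbU with hwb | ⟨y, hy, z, ⟨hzS, hzU⟩, hyz⟩
  · rcases huw with rfl | huw
    · exact ((disjoint_carved_of_rank_lt hab).notMem_of_mem_left hua (hcarved_b hwb)).elim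
    · exact ⟨u, hua, w, hcarved_b hwb, huw⟩
  · exact ⟨z, hUb ⟨hzU, hzS.2⟩, y, hcarved_b hy, hyz.symm⟩

end Carving

section LeadingPair

open Finset Equiv

variable {α : Type u} [LinearOrder α] {T : Finset α} {a b : α}

def IsLeadingPair (T : Finset α) (σ : Perm α) (a b : α) : Prop :=
  σ a < σ b ∧ ∀ t ∈ T, t ≠ a → t ≠ b → σ b < σ t

lemma exists_isLeadingPair (hT : 1 < #T) (σ : Perm α) :
    ∃ q ∈ T.offDiag, IsLeadingPair T σ q.1 q.2 := by
  obtain ⟨a, ha, hamin⟩ := T.exists_min_image σ (card_pos.mp (by omega))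
  obtain ⟨b, hb, hbmin⟩ := (T.erase a).exists_min_image σ
    (card_pos.mp (by rw [card_erase_of_mem ha]; omega))
  have hba : b ≠ a := ne_of_mem_erase hb
  refine ⟨(a, b), mem_offDiag.mpr ⟨ha, mem_of_mem_erase hb, hba.symm⟩,
    (hamin b (mem_of_mem_erase hb)).lt_of_ne (σ.injective.ne hba.symm), fun t ht hta htb => ?_⟩
  exact (hbmin t (mem_erase.mpr ⟨hta, ht⟩)).lt_of_ne (σ.injective.ne (Ne.symm htb))

lemma exists_perm_apply_eq_apply_eq (ha : a ∈ T) (hb : b ∈ T) (hab : a ≠ b) {a' b' : α}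
    (ha' : a' ∈ T) (hb' : b' ∈ T) (hab' : a' ≠ b') :
    ∃ π : Perm α, π a = a' ∧ π b = b' ∧ ∀ t ∈ T, π t ∈ T := by
  have hswap : ∀ {u v t : α}, u ∈ T → v ∈ T → t ∈ T → swap u v t ∈ T := by
    intro u v t hu hv ht
    rw [swap_apply_def]
    split_ifs <;> assumption
  refine ⟨(swap a a').trans (swap (swap a a' b) b'), ?_, by simp, fun t ht => ?_⟩
  · rw [trans_apply, swap_apply_left]
    refine swap_apply_of_ne_of_ne (fun h => hab ?_) hab'
    exact (swap a a').injective (h.symm.trans (swap_apply_left a a').symm) |>.symm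
  · exact hswap (hswap ha ha' hb) hb' (hswap ha ha' ht)

lemma card_isLeadingPair_le [Fintype α] (ha : a ∈ T) (hb : b ∈ T) (hab : a ≠ b) {a' b' : α}
    (ha' : a' ∈ T) (hb' : b' ∈ T) (hab' : a' ≠ b') :
    #{σ | IsLeadingPair T σ a' b'} ≤ #{σ | IsLeadingPair T σ a b} := by
  obtain ⟨π, hπa, hπb, hπT⟩ := exists_perm_apply_eq_apply_eq ha hb hab ha' hb' hab'
  refine card_le_card_of_injOn (· * π) (fun σ hσ => ?_) (mul_left_injective π).injOn
  obtain ⟨hlt, hmin⟩ := (mem_filter.mp hσ).2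
  refine mem_filter.mpr ⟨mem_univ _, ?_, fun t ht hta htb => ?_⟩
  · simpa [Perm.mul_apply, hπa, hπb] using hlt
  · simp only [Perm.mul_apply, hπb]
    exact hmin (π t) (hπT t ht) (hπa ▸ π.injective.ne hta) (hπb ▸ π.injective.ne htb)

/-- Every ranking has a leading pair in `T`, and all ordered pairs of `T` lead equally often. -/
theorem card_perm_le_card_sq_mul_card_isLeadingPair [Fintype α] (ha : a ∈ T) (hb : b ∈ T)
    (hab : a ≠ b) :
    Fintype.card (Perm α) ≤ #T ^ 2 * #{σ | IsLeadingPair T σ a b} := by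
  have hT : 1 < #T := one_lt_card.mpr ⟨a, ha, b, hb, hab⟩
  calc Fintype.card (Perm α) = #(univ : Finset (Perm α)) := card_univ.symm
    _ ≤ #(T.offDiag.biUnion fun q => {σ | IsLeadingPair T σ q.1 q.2}) := by
        refine card_le_card fun σ _ => ?_
        obtain ⟨q, hq, hσ⟩ := exists_isLeadingPair hT σ
        exact mem_biUnion.mpr ⟨q, hq, mem_filter.mpr ⟨mem_univ _, hσ⟩⟩
    _ ≤ ∑ q ∈ T.offDiag, #{σ | IsLeadingPair T σ q.1 q.2} := card_biUnion_le
    _ ≤ ∑ _q ∈ T.offDiag, #{σ | IsLeadingPair T σ a b} := by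
        refine sum_le_sum fun q hq => ?_
        obtain ⟨hq1, hq2, hq12⟩ := mem_offDiag.mp hq
        exact card_isLeadingPair_le ha hb hab hq1 hq2 hq12
    _ ≤ #T ^ 2 * #{σ | IsLeadingPair T σ a b} := by
        rw [sum_const, smul_eq_mul, offDiag_card, sq]
        exact Nat.mul_le_mul_right _ (Nat.sub_le _ _)

end LeadingPair

open Finset in
lemma card_le_mul_of_double_counting {Ω : Type u} {ι : Type v} [Fintype Ω] [Nonempty Ω]
    (A : Finset ι) (good : Ω → ι → Prop) (m : ℕ) (K : ℝ)
    (hA : ∀ i ∈ A, Fintype.card Ω ≤ m * #{ω | good ω i})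
    (hK : ∀ ω, (#{i ∈ A | good ω i} : ℝ) ≤ K) :
    (#A : ℝ) ≤ m * K := by
  have hcount : #A * Fintype.card Ω ≤ m * ∑ ω, #{i ∈ A | good ω i} := by
    calc #A * Fintype.card Ω = ∑ _i ∈ A, Fintype.card Ω := by rw [sum_const, smul_eq_mul]
      _ ≤ ∑ i ∈ A, m * #{ω | good ω i} := sum_le_sum hA
      _ = m * ∑ ω, #{i ∈ A | good ω i} := by
        rw [← mul_sum]
        exact congrArg (m * ·) (sum_card_bipartiteAbove_eq_sum_card_bipartiteBelow
          (r := fun i ω => good ω i))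
  have hΩ : (0 : ℝ) < Fintype.card Ω := by exact_mod_cast Fintype.card_pos
  refine le_of_mul_le_mul_right ?_ hΩ
  calc (#A : ℝ) * Fintype.card Ω ≤ m * ∑ ω, (#{i ∈ A | good ω i} : ℝ) := by
        exact_mod_cast hcount
    _ ≤ m * ∑ _ω : Ω, K := by gcongr with ω; exact hK ω
    _ = m * K * Fintype.card Ω := by rw [sum_const, card_univ, nsmul_eq_mul]; ring

section Grad

open Finset

variable {V : Type u} [Fintype V] {G : SimpleGraph V} {r : ℕ} {p : ℕ}

lemma ncard_edgeSet_le_sq (H : SimpleGraph (Fin p)) : H.edgeSet.ncard ≤ p ^ 2 := by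
  rw [← SimpleGraph.coe_edgeFinset, Set.ncard_coe_finset]
  calc #H.edgeFinset ≤ (Fintype.card (Fin p)).choose 2 := H.card_edgeFinset_le_card_choose_two
    _ ≤ p ^ 2 := by rw [Fintype.card_fin]; exact Nat.choose_le_pow p 2

lemma card_le_of_isBallFamily_one {B : Fin p → Set V} (hB : IsBallFamily G r 1 B) :
    p ≤ Fintype.card V := by
  have hpt : ∀ i, ∃ v, v ∈ B i := fun i => let ⟨⟨v, hv⟩, _⟩ := (hB.1 i).2; ⟨v, hv⟩
  choose f hf using hpt
  have hinj : Function.Injective f := fun i j hij =>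
    (Set.ncard_le_one_iff (Set.toFinite _)).mp (hB.2 (f i)) (hf i)
      (show f i ∈ B j from hij ▸ hf j)
  simpa using Fintype.card_le_of_injective f hinj

lemma bddAbove_gradR_set : BddAbove {x : ℝ | ∃ (p : ℕ) (B : Fin p → Set V),
    IsBallFamily G r 1 B ∧ x = ((quotientGraph G B).edgeSet.ncard : ℝ) / (p : ℝ)} := by
  refine ⟨Fintype.card V, ?_⟩
  rintro _ ⟨p, B, hB, rfl⟩
  rcases Nat.eq_zero_or_pos p with rfl | hp
  · simp
  rw [div_le_iff₀ (by exact_mod_cast hp)]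
  calc ((quotientGraph G B).edgeSet.ncard : ℝ) ≤ (p : ℝ) * p := by
        exact_mod_cast (ncard_edgeSet_le_sq _).trans_eq (sq p)
    _ ≤ Fintype.card V * p := by gcongr; exact_mod_cast card_le_of_isBallFamily_one hB

lemma gradR_nonneg : 0 ≤ gradR r G := by
  refine le_csSup bddAbove_gradR_set
    ⟨0, Fin.elim0, ⟨fun i => i.elim0, fun _ => ?_⟩, by simp⟩
  simp [Set.eq_empty_of_isEmpty]

lemma ncard_edgeSet_quotientGraph_le_gradR_mul {B : Fin p → Set V}
    (hB : IsBallFamily G r 1 B) : ((quotientGraph G B).edgeSet.ncard : ℝ) ≤ gradR r G * p := by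
  rcases Nat.eq_zero_or_pos p with rfl | hp
  · simp [Set.eq_empty_of_isEmpty]
  rw [← div_le_iff₀ (by exact_mod_cast hp)]
  exact le_csSup bddAbove_gradR_set ⟨p, B, hB, rfl⟩

/-- Dropping the empty sets, which carry no edge of the quotient, leaves a family of
complexity `1`. -/
lemma ncard_edgeSet_quotientGraph_le_gradR_mul_of_pairwise_disjoint (C : Fin p → Set V)
    (hdisj : Pairwise fun i j => Disjoint (C i) (C j))
    (hball : ∀ i, (C i).Nonempty → (G.induce (C i)).Connected ∧
      ∃ z : C i, ∀ y : C i, (G.induce (C i)).dist z y ≤ r) :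
    ((quotientGraph G C).edgeSet.ncard : ℝ) ≤ gradR r G * p := by
  set s : Finset (Fin p) := {i | (C i).Nonempty}
  set e : Fin #s ≃ s := s.equivFin.symm
  set f : Fin #s → Fin p := fun k => e k
  have hf : Function.Injective f := Subtype.val_injective.comp e.injective
  have hfe : ∀ i (hi : i ∈ s), f (e.symm ⟨i, hi⟩) = i := by simp [f]
  have hD : IsBallFamily G r 1 (C ∘ f) :=
    ⟨fun k => hball _ (mem_filter.mp (e k).2).2,
      fun v => (Set.ncard_le_one_iff (Set.toFinite _)).mpr fun hk hl =>
        hf (hdisj.eq (Set.not_disjoint_iff.mpr ⟨v, hk, hl⟩))⟩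
  have hsub :
      (quotientGraph G C).edgeSet ⊆ Sym2.map f '' (quotientGraph G (C ∘ f)).edgeSet := by
    intro d hd
    induction d using Sym2.ind with
    | _ i j =>
      obtain ⟨hij, hmeet⟩ := hd
      have hi : i ∈ s := mem_filter.mpr ⟨mem_univ _, by
        rcases hmeet with ⟨v, hv, -⟩ | ⟨v, hv, -⟩
        exacts [⟨v, hv⟩, ⟨v, hv⟩]⟩
      have hj : j ∈ s := mem_filter.mpr ⟨mem_univ _, by
        rcases hmeet with ⟨v, -, hv⟩ | ⟨-, -, v, hv, -⟩
        exacts [⟨v, hv⟩, ⟨v, hv⟩]⟩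
      refine ⟨s(e.symm ⟨i, hi⟩, e.symm ⟨j, hj⟩), ⟨fun h => hij ?_, ?_⟩, ?_⟩
      · rw [← hfe i hi, ← hfe j hj]
        exact congrArg f h
      · simpa only [Function.comp_apply, hfe] using hmeet
      · rw [Sym2.map_mk, hfe i hi, hfe j hj]
  calc ((quotientGraph G C).edgeSet.ncard : ℝ)
      ≤ (quotientGraph G (C ∘ f)).edgeSet.ncard := by
        exact_mod_cast (Set.ncard_le_ncard hsub).trans (Set.ncard_image_le (Set.toFinite _))
    _ ≤ gradR r G * #s := ncard_edgeSet_quotientGraph_le_gradR_mul hD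
    _ ≤ gradR r G * p := by
        gcongr
        · exact gradR_nonneg
        · simpa using s.card_le_univ

end Grad

section Complexity

open Finset SimpleGraph Equiv

variable {V : Type u} {G : SimpleGraph V} {r c p : ℕ} {B : Fin p → Set V} {x : Fin p → V}

noncomputable def ballsMeeting (B : Fin p → Set V) (S : Finset V) : Finset (Fin p) :=
  {t | ∃ v ∈ S, v ∈ B t}

lemma card_filter_mem_le (hc : ∀ v, ({i | v ∈ B i} : Set (Fin p)).ncard ≤ c) (v : V) :
    #{i | v ∈ B i} ≤ c := by
  simpa [Set.ncard_eq_toFinset_card'] using hc v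

lemma card_ballsMeeting_le (hc : ∀ v, ({i | v ∈ B i} : Set (Fin p)).ncard ≤ c)
    (S : Finset V) : #(ballsMeeting B S) ≤ #S * c := by
  calc #(ballsMeeting B S) ≤ #(S.biUnion fun v => {i | v ∈ B i}) := by
        refine card_le_card fun t ht => ?_
        obtain ⟨v, hv, hvt⟩ := (mem_filter.mp ht).2
        exact mem_biUnion.mpr ⟨v, hv, mem_filter.mpr ⟨mem_univ _, hvt⟩⟩
    _ ≤ ∑ v ∈ S, #{i | v ∈ B i} := card_biUnion_le
    _ ≤ #S * c := by
        simpa using sum_le_sum fun v (_ : v ∈ S) => card_filter_mem_le hc v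

lemma card_filter_center_mem_le (hc : ∀ v, ({i | v ∈ B i} : Set (Fin p)).ncard ≤ c)
    (x : Fin p → V) : #{q : Fin p × Fin p | x q.2 ∈ B q.1} ≤ p * c := by
  calc #{q : Fin p × Fin p | x q.2 ∈ B q.1}
      = #(univ.biUnion fun b => ({a | x b ∈ B a} : Finset (Fin p)) ×ˢ {b}) := by
        congr 1
        ext ⟨a, b⟩
        simp
    _ ≤ ∑ b : Fin p, #(({a | x b ∈ B a} : Finset (Fin p)) ×ˢ {b}) := card_biUnion_le
    _ ≤ p * c := by
        simpa using sum_le_sum fun b (_ : b ∈ univ) => card_filter_mem_le hc (x b)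

lemma exists_centers (hB : IsBallFamily G r c B) :
    ∃ x : Fin p → V, ∀ i, B i ⊆ G.ballIn (B i) (x i) r := by
  choose z hz using fun i => (hB.1 i).2
  exact ⟨fun i => z i, fun i => subset_ballIn_of_dist_le (hB.1 i).1 (z i) (hz i)⟩

lemma exists_linking_walks (hx : ∀ i, B i ⊆ G.ballIn (B i) (x i) r) {a b : Fin p}
    (hab : (quotientGraph G B).Adj a b) :
    ∃ S : Finset V, #S ≤ 2 * r + 2 ∧ ∃ u w, u ∈ G.ballIn (B a ∩ S) (x a) r ∧
      w ∈ G.ballIn (B b ∩ S) (x b) r ∧ (u = w ∨ G.Adj u w) := by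
  obtain ⟨u, hu, w, hw, huw⟩ : ∃ u ∈ B a, ∃ w ∈ B b, u = w ∨ G.Adj u w := by
    rcases hab.2 with ⟨v, hva, hvb⟩ | ⟨u, hu, w, hw, huw⟩
    exacts [⟨v, hva, v, hvb, .inl rfl⟩, ⟨u, hu, w, hw, .inr huw⟩]
  obtain ⟨Q, hQ, hQB⟩ := hx a hu
  obtain ⟨R, hR, hRB⟩ := hx b hw
  refine ⟨Q.support.toFinset ∪ R.support.toFinset, ?_, u, w,
    ⟨Q, hQ, fun y hy => ⟨hQB y hy, by simp [hy]⟩⟩,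
    ⟨R, hR, fun y hy => ⟨hRB y hy, by simp [hy]⟩⟩, huw⟩
  calc #(Q.support.toFinset ∪ R.support.toFinset)
      ≤ Q.support.length + R.support.length :=
        (card_union_le _ _).trans (add_le_add (List.toFinset_card_le _) (List.toFinset_card_le _))
    _ ≤ 2 * r + 2 := by simp only [Walk.length_support]; omega

/-- Every ball carved before `b`, other than `a`, misses the linking walks. -/
lemma quotientGraph_carved_adj {σ : Perm (Fin p)} {a b : Fin p} {S : Finset V} {u w : V}
    (hu : u ∈ G.ballIn (B a ∩ S) (x a) r) (hw : w ∈ G.ballIn (B b ∩ S) (x b) r)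
    (huw : u = w ∨ G.Adj u w) (hxb : x b ∉ B a)
    (hlead : IsLeadingPair (ballsMeeting B S) σ a b) :
    (quotientGraph G (carved G B x r fun i => (σ i : ℕ))).Adj a b := by
  have hba : b ≠ a := fun h => (h ▸ hlead.1).false
  refine ⟨hba.symm, .inr (exists_adj_carved hlead.1 hu hw huw (fun t hta htb => ?_) hxb)⟩
  refine Set.disjoint_left.mpr fun v hvt hvS => (show σ t < σ b from htb).not_gt ?_
  exact hlead.2 t (mem_filter.mpr ⟨mem_univ _, v, hvS, hvt⟩) hta
    (by rintro rfl; exact htb.false)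

lemma card_filter_isLeadingPair_le [Fintype V] (σ : Perm (Fin p)) (P : Finset (Fin p × Fin p))
    (S : Fin p × Fin p → Finset V)
    (hP : ∀ q ∈ P, x q.2 ∉ B q.1 ∧ ∃ u w, u ∈ G.ballIn (B q.1 ∩ S q) (x q.1) r ∧
      w ∈ G.ballIn (B q.2 ∩ S q) (x q.2) r ∧ (u = w ∨ G.Adj u w)) :
    (#{q ∈ P | IsLeadingPair (ballsMeeting B (S q)) σ q.1 q.2} : ℝ) ≤ gradR r G * p := by
  set C := carved G B x r fun i => (σ i : ℕ)
  calc (#{q ∈ P | IsLeadingPair (ballsMeeting B (S q)) σ q.1 q.2} : ℝ)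
      ≤ (quotientGraph G C).edgeSet.ncard := by
        rw [← Set.ncard_coe_finset]
        refine Nat.cast_le.mpr (Set.ncard_le_ncard_of_injOn (fun q => s(q.1, q.2)) ?_ ?_)
        · intro q hq
          obtain ⟨hqP, hlead⟩ := mem_filter.mp hq
          obtain ⟨hxb, u, w, hu, hw, huw⟩ := hP q hqP
          exact quotientGraph_carved_adj hu hw huw hxb hlead
        · intro q hq q' hq' hqq'
          rcases Sym2.eq_iff.mp hqq' with ⟨h1, h2⟩ | ⟨h1, h2⟩
          · exact Prod.ext h1 h2
          · have h := (mem_filter.mp hq').2.1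
            rw [← h1, ← h2] at h
            exact ((mem_filter.mp hq).2.1.asymm h).elim
    _ ≤ gradR r G * p := ncard_edgeSet_quotientGraph_le_gradR_mul_of_pairwise_disjoint C
        (pairwise_disjoint_carved fun _ _ h => σ.injective (Fin.ext h))
        fun _ hi => carved_isBall hi

lemma ncard_edgeSet_le_card_add_card {α : Type u} [Fintype α] (H : SimpleGraph α)
    (P : α × α → Prop) :
    H.edgeSet.ncard ≤ #{q | P q} + #{q : α × α | H.Adj q.1 q.2 ∧ ¬ P q} := by
  set A : Finset (α × α) := {q | P q}
  set A' : Finset (α × α) := {q | H.Adj q.1 q.2 ∧ ¬ P q}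
  have hsub : H.edgeSet ⊆ ↑((A ∪ A').image fun q => s(q.1, q.2)) := by
    intro d hd
    induction d using Sym2.ind with
    | _ a b =>
      refine mem_coe.mpr (mem_image.mpr ⟨(a, b), ?_, rfl⟩)
      by_cases hP : P (a, b)
      · exact mem_union_left _ (mem_filter.mpr ⟨mem_univ _, hP⟩)
      · exact mem_union_right _ (mem_filter.mpr ⟨mem_univ _, hd, hP⟩)
  exact (Set.ncard_le_ncard hsub (finite_toSet _)).trans_eq (Set.ncard_coe_finset _) |>.trans
    (card_image_le.trans (card_union_le _ _))

theorem ncard_edgeSet_quotientGraph_le [Fintype V] (hB : IsBallFamily G r c B) :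
    ((quotientGraph G B).edgeSet.ncard : ℝ) ≤ (c + ((2 * r + 2) * c) ^ 2 * gradR r G) * p := by
  obtain ⟨x, hx⟩ := exists_centers hB
  choose! S hS using fun q : Fin p × Fin p => fun h : (quotientGraph G B).Adj q.1 q.2 =>
    exists_linking_walks hx h
  set easy : Finset (Fin p × Fin p) := {q | x q.2 ∈ B q.1}
  set hard : Finset (Fin p × Fin p) := {q | (quotientGraph G B).Adj q.1 q.2 ∧ x q.2 ∉ B q.1}
  have hsplit : (quotientGraph G B).edgeSet.ncard ≤ #easy + #hard :=
    ncard_edgeSet_le_card_add_card _ fun q => x q.2 ∈ B q.1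
  have hhard : (#hard : ℝ) ≤ (((2 * r + 2) * c) ^ 2 : ℕ) * (gradR r G * p) := by
    refine card_le_mul_of_double_counting hard
      (fun σ q => IsLeadingPair (ballsMeeting B (S q)) σ q.1 q.2) _ _
      (fun q hq => ?_) fun σ => ?_
    · obtain ⟨hadj, -⟩ := (mem_filter.mp hq).2
      obtain ⟨hScard, u, w, hu, hw, -⟩ := hS q hadj
      have hmem : ∀ {i v}, v ∈ G.ballIn (B i ∩ S q) (x i) r → i ∈ ballsMeeting B (S q) :=
        fun hv => mem_filter.mpr ⟨mem_univ _, _, (center_mem_of_mem_ballIn hv).2,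
          (center_mem_of_mem_ballIn hv).1⟩
      refine (card_perm_le_card_sq_mul_card_isLeadingPair (hmem hu) (hmem hw) hadj.1).trans ?_
      gcongr
      exact (card_ballsMeeting_le hB.2 _).trans (Nat.mul_le_mul_right c hScard)
    · exact card_filter_isLeadingPair_le σ hard S fun q hq =>
        ⟨(mem_filter.mp hq).2.2, (hS q (mem_filter.mp hq).2.1).2⟩
  calc ((quotientGraph G B).edgeSet.ncard : ℝ) ≤ #easy + #hard := by exact_mod_cast hsplit
    _ ≤ p * c + (((2 * r + 2) * c) ^ 2 : ℕ) * (gradR r G * p) := by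
        gcongr
        exact_mod_cast card_filter_center_mem_le hB.2 x
    _ = (c + ((2 * r + 2) * c) ^ 2 * gradR r G) * p := by push_cast; ring

end Complexity

/-- `∇^c_r(G)` is polynomially bounded in `c` and `∇_r(G)`. -/
theorem stmt11 (r : ℕ) :
    ∃ P : MvPolynomial (Fin 2) ℝ,
      ∀ (V : Type) [Fintype V], ∀ G : SimpleGraph V, ∀ c : ℕ, 1 ≤ c →
        gradCR c r G ≤ MvPolynomial.eval ![(c : ℝ), gradR r G] P := by
  refine ⟨.X 0 + .C ((2 * r + 2 : ℝ) ^ 2) * .X 0 ^ 2 * .X 1, fun V _ G c _ => ?_⟩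
  have hP : MvPolynomial.eval ![(c : ℝ), gradR r G]
      (.X 0 + .C ((2 * r + 2 : ℝ) ^ 2) * .X 0 ^ 2 * .X 1) =
        c + ((2 * r + 2) * c) ^ 2 * gradR r G := by
    simp only [map_add, map_mul, map_pow, MvPolynomial.eval_X, MvPolynomial.eval_C]
    simp only [Matrix.cons_val_zero, Matrix.cons_val_one]
    ring
  have hnonneg : 0 ≤ (c : ℝ) + ((2 * r + 2) * c) ^ 2 * gradR r G := by
    have := gradR_nonneg (G := G) (r := r)
    positivity
  rw [hP]
  refine Real.sSup_le (fun _ ⟨p, B, hB, hx⟩ => hx ▸ ?_) hnonneg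
  exact div_le_of_le_mul₀ p.cast_nonneg hnonneg (ncard_edgeSet_quotientGraph_le hB)
end
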